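/- Let f : ℕ² → ℝ have finite support, and define its Poisson generating transform Λf(y₁,y₂) = ∑_{k₁,k₂ ∈ ℕ} f(k₁,k₂) y₁^{k₁} y₂^{k₂}/(k₁! k₂!). Let L_d be the single-edge discrete harmonic generator L_d f(n₁,n₂) = ∑_{k=1}^{n₁}(1/k)(f(n₁−k,n₂+k) − f(n₁,n₂)) + ∑_{k=1}^{n₂}(1/k)(f(n₁+k,n₂−k) − f(n₁,n₂)). Then for all y₁, y₂ ≥ 0, Λ(L_d f)(y₁,y₂) = ∫₀¹ u^{−1} [ Λf(y₁(1−u), y₂ + u y₁) + Λf(y₁ + u y₂, y₂(1−u)) − 2 Λf(y₁,y₂) ] du, where the u-integral converges absolutely. (This is the Poisson intertwining between the discrete and the continuous harmonic models on a single edge.) -/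

import Mathlib

open MeasureTheory Real Set

/-- Poisson generating transform of a function on ℕ². -/
noncomputable def poissonTransform (f : ℕ × ℕ → ℝ) (y₁ y₂ : ℝ) : ℝ :=
  ∑' k : ℕ × ℕ, f k * y₁ ^ k.1 * y₂ ^ k.2 / (k.1.factorial * k.2.factorial)

/-- Single-edge discrete harmonic generator. -/
noncomputable def discreteHarmonicGen (f : ℕ × ℕ → ℝ) (n : ℕ × ℕ) : ℝ :=
  (∑ k ∈ Finset.Icc 1 n.1, (k : ℝ)⁻¹ * (f (n.1 - k, n.2 + k) - f n)) +
  (∑ k ∈ Finset.Icc 1 n.2, (k : ℝ)⁻¹ * (f (n.1 + k, n.2 - k) - f n))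

/-!
Both sides are linear in `f`, and for finitely supported `f` the transform `Λ f` is the finite
sum `∑ₘ f m · y₁^m₁ y₂^m₂ / (m₁! m₂!)`. The discrete generator is the sum of the jumps from
site 1 to site 2 and their mirror image, and the continuous generator splits the same way, so it
suffices to treat one direction. On the discrete side, re-indexing by the target configuration
(a jump conserves `n₁ + n₂`) moves the generator onto the Poisson monomials. On the continuous
side, the binomial expansion of `(y₂ + u y₁)^b`, the Beta integrals
`∫₀¹ u^(k-1) (1-u)^a du = (k-1)! a! / (k+a)!` and `∫₀¹ ((1-u)^a - 1) / u du = -H_a` produce the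
same coefficients.
-/

open Finset
open scoped Nat

lemma Continuous.integrableOn_Ioo {E : Type*} [NormedAddCommGroup E] {g : ℝ → E}
    (hg : Continuous g) {a b : ℝ} : IntegrableOn g (Ioo a b) :=
  hg.integrableOn_Icc.mono_set Ioo_subset_Icc_self

lemma integral_Ioo_pow_mul_one_sub_pow (k a : ℕ) :
    ∫ u in Ioo (0:ℝ) 1, u ^ k * (1 - u) ^ a = k ! * a ! / (k + a + 1)! := by
  induction a generalizing k with
  | zero =>
    rw [← integral_Ioc_eq_integral_Ioo, ← intervalIntegral.integral_of_le zero_le_one]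
    simp only [pow_zero, mul_one, add_zero, integral_pow, one_pow, zero_pow k.succ_ne_zero,
      sub_zero, Nat.factorial_zero, Nat.factorial_succ]
    push_cast
    field_simp
  | succ a ih =>
    have hsplit : ∀ u : ℝ,
        u ^ k * (1 - u) ^ (a + 1) = u ^ k * (1 - u) ^ a - u ^ (k + 1) * (1 - u) ^ a :=
      fun u => by ring
    simp_rw [hsplit]
    rw [integral_sub ((by fun_prop : Continuous _).integrableOn_Ioo)
      ((by fun_prop : Continuous _).integrableOn_Ioo), ih, ih,
      show k + (a + 1) + 1 = k + a + 1 + 1 by ring, show k + 1 + a + 1 = k + a + 1 + 1 by ring]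
    simp only [Nat.factorial_succ]
    push_cast
    field_simp
    ring

lemma inv_mul_one_sub_pow_sub_one {u : ℝ} (hu : u ≠ 0) (a : ℕ) :
    u⁻¹ * ((1 - u) ^ a - 1) = -∑ i ∈ range a, (1 - u) ^ i := by
  have := geom_sum_mul (1 - u) a
  field_simp
  linear_combination -this

lemma add_pow_sub_pow_eq_sum_Icc {R : Type*} [CommRing R] (x y : R) (n : ℕ) :
    (x + y) ^ n - y ^ n = ∑ k ∈ Icc 1 n, x ^ k * y ^ (n - k) * n.choose k := by
  rw [add_pow, range_eq_Ico, sum_eq_sum_Ico_succ_bot (by omega : 0 < n + 1), zero_add,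
    Finset.Ico_add_one_right_eq_Icc]
  simp

lemma inv_mul_transfer_monomial_sub {u : ℝ} (hu : u ≠ 0) (a b : ℕ) (z w : ℝ) :
    u⁻¹ * ((z * (1 - u)) ^ a * (w + u * z) ^ b - z ^ a * w ^ b)
      = ∑ k ∈ Icc 1 b, (b.choose k * z ^ (a + k) * w ^ (b - k)) * (u ^ (k - 1) * (1 - u) ^ a)
        - z ^ a * w ^ b * ∑ i ∈ range a, (1 - u) ^ i := by
  have hbinom : u⁻¹ * ((u * z + w) ^ b - w ^ b)
      = ∑ k ∈ Icc 1 b, z ^ k * w ^ (b - k) * b.choose k * u ^ (k - 1) := by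
    rw [add_pow_sub_pow_eq_sum_Icc, mul_sum]
    refine sum_congr rfl fun k hk => ?_
    obtain ⟨j, rfl⟩ : ∃ j, k = j + 1 := ⟨k - 1, by grind⟩
    rw [add_tsub_cancel_right]
    field_simp
    ring
  calc _ = z ^ a * (1 - u) ^ a * (u⁻¹ * ((u * z + w) ^ b - w ^ b))
        + z ^ a * w ^ b * (u⁻¹ * ((1 - u) ^ a - 1)) := by
          rw [mul_pow, add_comm w]
          ring
    _ = _ := by
      rw [hbinom, inv_mul_one_sub_pow_sub_one hu, mul_sum, mul_neg, ← sub_eq_add_neg]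
      congr 1
      refine sum_congr rfl fun k _ => ?_
      ring

lemma integrableOn_inv_mul_transfer_monomial_sub (a b : ℕ) (z w : ℝ) :
    IntegrableOn (fun u : ℝ => u⁻¹ * ((z * (1 - u)) ^ a * (w + u * z) ^ b - z ^ a * w ^ b))
      (Ioo 0 1) := by
  refine (integrableOn_congr_fun (fun u hu => inv_mul_transfer_monomial_sub hu.1.ne' a b z w)
    measurableSet_Ioo).2 ?_
  exact (by fun_prop : Continuous _).integrableOn_Ioo

lemma integral_inv_mul_transfer_monomial_sub (a b : ℕ) (z w : ℝ) :
    ∫ u in Ioo (0:ℝ) 1, u⁻¹ * ((z * (1 - u)) ^ a * (w + u * z) ^ b - z ^ a * w ^ b)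
      = ∑ k ∈ Icc 1 b, (b.choose k * z ^ (a + k) * w ^ (b - k)) * ((k - 1)! * a ! / (k + a)!)
        - z ^ a * w ^ b * harmonic a := by
  have hint_pow : ∀ k : ℕ, IntegrableOn (fun u : ℝ => u ^ (k - 1) * (1 - u) ^ a) (Ioo 0 1) :=
    fun k => (by fun_prop : Continuous _).integrableOn_Ioo
  have hint_geom : ∀ i : ℕ, IntegrableOn (fun u : ℝ => (1 - u) ^ i) (Ioo 0 1) :=
    fun i => (by fun_prop : Continuous _).integrableOn_Ioo
  rw [setIntegral_congr_fun measurableSet_Ioo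
      (fun u hu => inv_mul_transfer_monomial_sub hu.1.ne' a b z w),
    integral_sub (integrable_finsetSum _ fun k _ => (hint_pow _).const_mul _)
      ((integrable_finsetSum _ fun i _ => hint_geom i).const_mul _),
    integral_finsetSum _ fun k _ => (hint_pow _).const_mul _, integral_const_mul,
    integral_finsetSum _ fun i _ => hint_geom i]
  congr 1
  · refine sum_congr rfl fun k hk => ?_
    rw [integral_const_mul, integral_Ioo_pow_mul_one_sub_pow,
      show k - 1 + a + 1 = k + a by grind]
  · have hgeom : ∀ i : ℕ, ∫ u in Ioo (0:ℝ) 1, (1 - u) ^ i = ((i + 1 : ℕ) : ℝ)⁻¹ := fun i => by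
      have := integral_Ioo_pow_mul_one_sub_pow 0 i
      simp only [pow_zero, one_mul, zero_add, Nat.factorial_zero, Nat.factorial_succ] at this
      rw [this]
      push_cast
      field_simp
    simp [hgeom, harmonic]

lemma choose_mul_beta_div_factorial {a b k : ℕ} (hk : k ∈ Finset.Icc 1 b) :
    (b.choose k : ℝ) * ((k - 1)! * a ! / (k + a)!) / (a ! * b !)
      = (k : ℝ)⁻¹ / ((a + k)! * (b - k)!) := by
  obtain ⟨hk1, hkb⟩ := Finset.mem_Icc.1 hk
  obtain ⟨j, rfl⟩ : ∃ j, k = j + 1 := ⟨k - 1, by omega⟩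
  have h := congrArg (Nat.cast (R := ℝ)) (Nat.choose_mul_factorial_mul_factorial hkb)
  push_cast [Nat.factorial_succ] at h
  rw [add_tsub_cancel_right, add_comm (j + 1) a]
  field_simp
  push_cast
  linear_combination h

noncomputable def poissonMonomial (n : ℕ × ℕ) (y₁ y₂ : ℝ) : ℝ :=
  y₁ ^ n.1 * y₂ ^ n.2 / (n.1 ! * n.2 !)

lemma inv_mul_poissonMonomial_transfer_sub (m : ℕ × ℕ) (y₁ y₂ : ℝ) :
    (fun u : ℝ => u⁻¹ * (poissonMonomial m (y₁ * (1 - u)) (y₂ + u * y₁)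
        - poissonMonomial m y₁ y₂))
      = fun u => (m.1 ! * m.2 ! : ℝ)⁻¹
          * (u⁻¹ * ((y₁ * (1 - u)) ^ m.1 * (y₂ + u * y₁) ^ m.2 - y₁ ^ m.1 * y₂ ^ m.2)) := by
  ext u
  simp only [poissonMonomial]
  ring

lemma integrableOn_inv_mul_poissonMonomial_transfer_sub (m : ℕ × ℕ) (y₁ y₂ : ℝ) :
    IntegrableOn (fun u : ℝ => u⁻¹ * (poissonMonomial m (y₁ * (1 - u)) (y₂ + u * y₁)
        - poissonMonomial m y₁ y₂)) (Ioo 0 1) := by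
  rw [inv_mul_poissonMonomial_transfer_sub]
  exact (integrableOn_inv_mul_transfer_monomial_sub _ _ _ _).const_mul _

lemma integral_inv_mul_poissonMonomial_transfer_sub (m : ℕ × ℕ) (y₁ y₂ : ℝ) :
    ∫ u in Ioo (0:ℝ) 1, u⁻¹ * (poissonMonomial m (y₁ * (1 - u)) (y₂ + u * y₁)
        - poissonMonomial m y₁ y₂)
      = ∑ k ∈ Icc 1 m.2, (k : ℝ)⁻¹ * poissonMonomial (m.1 + k, m.2 - k) y₁ y₂
        - harmonic m.1 * poissonMonomial m y₁ y₂ := by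
  rw [inv_mul_poissonMonomial_transfer_sub, integral_const_mul,
    integral_inv_mul_transfer_monomial_sub, mul_sub, mul_sum]
  congr 1
  · refine sum_congr rfl fun k hk => ?_
    simp only [poissonMonomial]
    linear_combination (y₁ ^ (m.1 + k) * y₂ ^ (m.2 - k)) * choose_mul_beta_div_factorial hk
  · rw [poissonMonomial]
    ring

def triangle (N : ℕ) : Finset (ℕ × ℕ) :=
  (range (N + 1) ×ˢ range (N + 1)).filter fun n => n.1 + n.2 ≤ N

@[simp]
lemma mem_triangle {N : ℕ} {n : ℕ × ℕ} : n ∈ triangle N ↔ n.1 + n.2 ≤ N := by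
  simp only [triangle, mem_filter, mem_product, Finset.mem_range]
  omega

lemma exists_subset_triangle {s : Set (ℕ × ℕ)} (hs : s.Finite) : ∃ N, s ⊆ triangle N := by
  obtain ⟨b, hb⟩ := hs.bddAbove
  exact ⟨b.1 + b.2, fun n hn => mem_triangle.2 (Nat.add_le_add (hb hn).1 (hb hn).2)⟩

lemma sum_triangle_transfer {M : Type*} [AddCommMonoid M] (N : ℕ)
    (Φ : ℕ × ℕ → ℕ × ℕ → ℕ → M) :
    ∑ n ∈ triangle N, ∑ k ∈ Icc 1 n.1, Φ n (n.1 - k, n.2 + k) k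
      = ∑ m ∈ triangle N, ∑ k ∈ Icc 1 m.2, Φ (m.1 + k, m.2 - k) m k := by
  rw [sum_sigma', sum_sigma']
  refine sum_nbij' (fun p => ⟨(p.1.1 - p.2, p.1.2 + p.2), p.2⟩)
    (fun q => ⟨(q.1.1 + q.2, q.1.2 - q.2), q.2⟩) ?_ ?_ ?_ ?_ ?_ <;>
  rintro ⟨⟨n₁, n₂⟩, k⟩ h <;> simp only [mem_sigma, mem_triangle, Finset.mem_Icc] at h ⊢ <;> grind

lemma poissonTransform_eq_sum {f : ℕ × ℕ → ℝ} {s : Finset (ℕ × ℕ)}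
    (hs : Function.support f ⊆ s) (y₁ y₂ : ℝ) :
    poissonTransform f y₁ y₂ = ∑ n ∈ s, f n * poissonMonomial n y₁ y₂ := by
  rw [poissonTransform, tsum_eq_sum fun n hn => by
    simp [Function.notMem_support.1 fun h => hn (hs h)]]
  refine sum_congr rfl fun n _ => ?_
  rw [poissonMonomial]
  ring

lemma poissonTransform_add {f g : ℕ × ℕ → ℝ} (hf : (Function.support f).Finite)
    (hg : (Function.support g).Finite) (y₁ y₂ : ℝ) :
    poissonTransform (f + g) y₁ y₂ = poissonTransform f y₁ y₂ + poissonTransform g y₁ y₂ := by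
  have hs := (hf.union hg).coe_toFinset.symm
  rw [poissonTransform_eq_sum (f := f + g) (hs ▸ Function.support_add f g),
    poissonTransform_eq_sum (f := f) (hs ▸ subset_union_left),
    poissonTransform_eq_sum (f := g) (hs ▸ subset_union_right), ← sum_add_distrib]
  simp only [Pi.add_apply, add_mul]

lemma poissonTransform_comp_swap (f : ℕ × ℕ → ℝ) (y₁ y₂ : ℝ) :
    poissonTransform (f ∘ Prod.swap) y₁ y₂ = poissonTransform f y₂ y₁ := by
  rw [poissonTransform, poissonTransform, ← (Equiv.prodComm ℕ ℕ).tsum_eq]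
  refine tsum_congr fun n => ?_
  simp only [Function.comp_apply, Equiv.prodComm_apply, Prod.fst_swap, Prod.snd_swap,
    Prod.swap_swap]
  ring

lemma finite_support_comp_swap {f : ℕ × ℕ → ℝ} (hf : (Function.support f).Finite) :
    (Function.support (f ∘ Prod.swap)).Finite := by
  rw [Function.support_comp_eq_preimage]
  exact hf.preimage Prod.swap_injective.injOn

noncomputable def transferGen (f : ℕ × ℕ → ℝ) (n : ℕ × ℕ) : ℝ :=
  ∑ k ∈ Finset.Icc 1 n.1, (k : ℝ)⁻¹ * (f (n.1 - k, n.2 + k) - f n)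

lemma discreteHarmonicGen_eq_transferGen_add (f : ℕ × ℕ → ℝ) :
    discreteHarmonicGen f = transferGen f + transferGen (f ∘ Prod.swap) ∘ Prod.swap :=
  rfl

lemma support_transferGen_subset {f : ℕ × ℕ → ℝ} {N : ℕ}
    (hf : Function.support f ⊆ triangle N) : Function.support (transferGen f) ⊆ triangle N := by
  intro n hn
  by_contra hout
  have hzero : ∀ m : ℕ × ℕ, m.1 + m.2 = n.1 + n.2 → f m = 0 := fun m hm =>
    Function.notMem_support.1 fun h => hout (mem_triangle.2 (hm ▸ mem_triangle.1 (hf h)))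
  exact hn (sum_eq_zero fun k hk => by
    rw [hzero _ (by grind), hzero n rfl, sub_self, mul_zero])

lemma finite_support_transferGen {f : ℕ × ℕ → ℝ} (hf : (Function.support f).Finite) :
    (Function.support (transferGen f)).Finite := by
  obtain ⟨N, hN⟩ := exists_subset_triangle hf
  exact (triangle N).finite_toSet.subset (support_transferGen_subset hN)

lemma poissonTransform_transferGen {f : ℕ × ℕ → ℝ} {N : ℕ}
    (hf : Function.support f ⊆ triangle N) (y₁ y₂ : ℝ) :
    poissonTransform (transferGen f) y₁ y₂
      = ∑ m ∈ triangle N, f m *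
          (∑ k ∈ Icc 1 m.2, (k : ℝ)⁻¹ * poissonMonomial (m.1 + k, m.2 - k) y₁ y₂
            - harmonic m.1 * poissonMonomial m y₁ y₂) := by
  have hterm : ∀ n, transferGen f n * poissonMonomial n y₁ y₂
      = ∑ k ∈ Icc 1 n.1, (k : ℝ)⁻¹ * f (n.1 - k, n.2 + k) * poissonMonomial n y₁ y₂
        - harmonic n.1 * f n * poissonMonomial n y₁ y₂ := fun n => by
    push_cast [transferGen, harmonic_eq_sum_Icc]
    simp only [mul_sub, sum_sub_distrib, sub_mul, sum_mul]
  have hreindex := sum_triangle_transfer N fun n n' k => (k : ℝ)⁻¹ * f n' * poissonMonomial n y₁ y₂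
  rw [poissonTransform_eq_sum (support_transferGen_subset hf), sum_congr rfl fun n _ => hterm n,
    sum_sub_distrib, hreindex, ← sum_sub_distrib]
  refine sum_congr rfl fun m _ => ?_
  rw [mul_sub, mul_sum]
  congr 1
  · exact sum_congr rfl fun k _ => by ring
  · ring

theorem transferGen_poisson_intertwining {f : ℕ × ℕ → ℝ} (hf : (Function.support f).Finite)
    (y₁ y₂ : ℝ) :
    IntegrableOn (fun u : ℝ =>
      u⁻¹ * (poissonTransform f (y₁ * (1 - u)) (y₂ + u * y₁) - poissonTransform f y₁ y₂))
        (Ioo 0 1) ∧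
    poissonTransform (transferGen f) y₁ y₂
      = ∫ u in Ioo (0:ℝ) 1,
          u⁻¹ * (poissonTransform f (y₁ * (1 - u)) (y₂ + u * y₁) - poissonTransform f y₁ y₂) := by
  obtain ⟨N, hN⟩ := exists_subset_triangle hf
  have hsum : (fun u : ℝ =>
      u⁻¹ * (poissonTransform f (y₁ * (1 - u)) (y₂ + u * y₁) - poissonTransform f y₁ y₂))
      = fun u => ∑ m ∈ triangle N, f m * (u⁻¹ * (poissonMonomial m (y₁ * (1 - u)) (y₂ + u * y₁)
          - poissonMonomial m y₁ y₂)) := by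
    ext u
    rw [poissonTransform_eq_sum hN, poissonTransform_eq_sum hN, ← sum_sub_distrib, mul_sum]
    exact sum_congr rfl fun m _ => by ring
  have hint : ∀ m ∈ triangle N, IntegrableOn (fun u : ℝ => f m * (u⁻¹ *
      (poissonMonomial m (y₁ * (1 - u)) (y₂ + u * y₁) - poissonMonomial m y₁ y₂))) (Ioo 0 1) :=
    fun m _ => (integrableOn_inv_mul_poissonMonomial_transfer_sub m y₁ y₂).const_mul (f m)
  rw [hsum, integral_finsetSum _ hint, poissonTransform_transferGen hN]
  refine ⟨integrable_finsetSum _ hint, sum_congr rfl fun m _ => ?_⟩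
  rw [integral_const_mul, integral_inv_mul_poissonMonomial_transfer_sub]

theorem harmonic_poisson_intertwining (f : ℕ × ℕ → ℝ)
    (hf : (Function.support f).Finite) (y₁ y₂ : ℝ) :
    IntegrableOn (fun u : ℝ =>
      u⁻¹ * (poissonTransform f (y₁ * (1 - u)) (y₂ + u * y₁) +
             poissonTransform f (y₁ + u * y₂) (y₂ * (1 - u)) -
             2 * poissonTransform f y₁ y₂)) (Set.Ioo 0 1) volume ∧
    poissonTransform (discreteHarmonicGen f) y₁ y₂
      = ∫ u in Set.Ioo (0:ℝ) 1,
          u⁻¹ * (poissonTransform f (y₁ * (1 - u)) (y₂ + u * y₁) +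
                 poissonTransform f (y₁ + u * y₂) (y₂ * (1 - u)) -
                 2 * poissonTransform f y₁ y₂) := by
  have hf' := finite_support_comp_swap hf
  obtain ⟨hint₁, heq₁⟩ := transferGen_poisson_intertwining hf y₁ y₂
  obtain ⟨hint₂, heq₂⟩ := transferGen_poisson_intertwining hf' y₂ y₁
  simp only [poissonTransform_comp_swap] at hint₂ heq₂
  have hsplit : (fun u : ℝ => u⁻¹ * (poissonTransform f (y₁ * (1 - u)) (y₂ + u * y₁) +
      poissonTransform f (y₁ + u * y₂) (y₂ * (1 - u)) - 2 * poissonTransform f y₁ y₂))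
      = fun u => u⁻¹ * (poissonTransform f (y₁ * (1 - u)) (y₂ + u * y₁) - poissonTransform f y₁ y₂)
        + u⁻¹ * (poissonTransform f (y₁ + u * y₂) (y₂ * (1 - u)) - poissonTransform f y₁ y₂) := by
    ext u
    ring
  rw [discreteHarmonicGen_eq_transferGen_add, poissonTransform_add (finite_support_transferGen hf)
    (finite_support_comp_swap (finite_support_transferGen hf')), poissonTransform_comp_swap,
    heq₁, heq₂, hsplit]
  exact ⟨hint₁.add hint₂, (integral_add hint₁ hint₂).symm⟩
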